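/- Let K ⊂ ℂ^d be compact and invariant under the torus action z ↦ (e^{it₁}z₁,…,e^{it_d}z_d). Fix a multi-index α ∈ (ℤ≥0)^d and let Q(α) be the set of polynomials of the form z^α + Σ_{β <ₗ α} c_β z^β, where <ₗ is the graded lexicographic order. Then inf_{q ∈ Q(α)} ‖q‖_K = ‖z^α‖_K; i.e., the monomial z^α is a Chebyshev polynomial of index α for K. -/

import Mathlib

open Finset MvPolynomial

/-- Total degree of a multi-index. -/
def mdeg {d : ℕ} (β : Fin d →₀ ℕ) : ℕ := β.sum fun _ n => n

/-- Graded lexicographic order on multi-indices: `β <ₗ α` iff `|β| < |α|`, or the total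
degrees agree and at the first differing coordinate `α` exceeds `β`. -/
def gradedLexLT {d : ℕ} (β α : Fin d →₀ ℕ) : Prop :=
  mdeg β < mdeg α ∨ (mdeg β = mdeg α ∧ ∃ i : Fin d, (∀ j, j < i → β j = α j) ∧ β i < α i)

/-- Sup norm of a polynomial on a set `K ⊆ ℂ^d`. -/
noncomputable def supNorm {d : ℕ} (K : Set (Fin d → ℂ)) (q : MvPolynomial (Fin d) ℂ) : ℝ :=
  sSup ((fun w => ‖MvPolynomial.eval w q‖) '' K)

/-!
Let `N` exceed every exponent occurring in `q` (`N = |α| + 1` works, as every monomial of `q`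
has total degree at most `|α|`) and let `ζ` be a primitive `N`-th root of unity. By orthogonality
of the characters of `(ℤ/N)^d`, the average of `q(ζ^k z) ζ^{-k·α}` over `k ∈ (ℤ/N)^d` is
`coeff α q · z^α`. The points `ζ^k z` lie in `K`, so `|z^α| ≤ ‖q‖_K` when `coeff α q = 1`.
-/

lemma le_mdeg {d : ℕ} (β : Fin d →₀ ℕ) (i : Fin d) : β i ≤ mdeg β :=
  Finsupp.le_degree i β

lemma gradedLexLT.mdeg_le {d : ℕ} {β α : Fin d →₀ ℕ} (h : gradedLexLT β α) : mdeg β ≤ mdeg α :=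
  h.elim le_of_lt fun h => h.1.le

theorem IsPrimitiveRoot.sum_pow_mul_div_pow_mul {R : Type*} [Field R] {ζ : R} {N a b : ℕ}
    (hζ : IsPrimitiveRoot ζ N) (ha : a < N) (hb : b < N) :
    ∑ k : Fin N, ζ ^ ((k : ℕ) * a) / ζ ^ ((k : ℕ) * b) = if a = b then (N : R) else 0 := by
  have hζ0 : ζ ≠ 0 := hζ.ne_zero (by omega)
  simp_rw [mul_comm _ a, mul_comm _ b, pow_mul, ← div_pow]
  rw [Fin.sum_univ_eq_sum_range (fun k => (ζ ^ a / ζ ^ b) ^ k)]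
  split_ifs with hab
  · simp [hab, hζ0]
  · have hω : ζ ^ a / ζ ^ b ≠ 1 := fun h =>
      hab (hζ.pow_inj ha hb (div_eq_one_iff_eq (pow_ne_zero b hζ0) |>.mp h))
    rw [geom_sum_eq hω, div_pow, ← pow_mul, ← pow_mul, mul_comm a, mul_comm b, pow_mul, pow_mul,
      hζ.pow_eq_one]
    simp

theorem sum_eval_rotate_div {R σ : Type*} [Field R] [Fintype σ] [DecidableEq σ]
    {ζ : R} {N : ℕ} (hζ : IsPrimitiveRoot ζ N) {q : MvPolynomial σ R} {α : σ →₀ ℕ}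
    (hq : ∀ β ∈ q.support, ∀ i, β i < N) (hα : ∀ i, α i < N) (z : σ → R) :
    ∑ k : σ → Fin N, eval (fun i => ζ ^ (k i : ℕ) * z i) q / ∏ i, ζ ^ ((k i : ℕ) * α i)
      = (N : R) ^ Fintype.card σ * coeff α q * ∏ i, z i ^ α i := by
  have hterm : ∀ k : σ → Fin N,
      eval (fun i => ζ ^ (k i : ℕ) * z i) q / ∏ i, ζ ^ ((k i : ℕ) * α i)
        = ∑ β ∈ q.support, coeff β q * (∏ i, z i ^ β i) *
            ∏ i, ζ ^ ((k i : ℕ) * β i) / ζ ^ ((k i : ℕ) * α i) := by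
    intro k
    simp only [eval_eq', sum_div, prod_div_distrib, mul_pow, ← pow_mul, prod_mul_distrib]
    refine sum_congr rfl fun β _ => by ring
  have horth : ∀ β ∈ q.support,
      ∑ k : σ → Fin N, ∏ i, ζ ^ ((k i : ℕ) * β i) / ζ ^ ((k i : ℕ) * α i)
        = if β = α then (N : R) ^ Fintype.card σ else 0 := by
    intro β hβ
    rw [← Fintype.prod_sum fun i (x : Fin N) => ζ ^ ((x : ℕ) * β i) / ζ ^ ((x : ℕ) * α i)]
    simp only [hζ.sum_pow_mul_div_pow_mul (hq β hβ _) (hα _)]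
    split_ifs with h
    · simp [h]
    · obtain ⟨i, hi⟩ : ∃ i, β i ≠ α i := by simpa [Finsupp.ext_iff] using h
      exact prod_eq_zero (mem_univ i) (if_neg hi)
  simp_rw [hterm]
  rw [sum_comm]
  simp_rw [← mul_sum]
  rw [sum_congr rfl fun β hβ => by rw [horth β hβ]]
  simp only [mul_ite, mul_zero, sum_ite_eq']
  split_ifs with h
  · ring
  · simp [notMem_support_iff.mp h]

section supNorm

variable {d : ℕ} {K : Set (Fin d → ℂ)} {q : MvPolynomial (Fin d) ℂ}

lemma supNorm_nonneg : 0 ≤ supNorm K q :=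
  Real.sSup_nonneg (by rintro _ ⟨w, -, rfl⟩; exact norm_nonneg _)

lemma norm_eval_le_supNorm (hK : IsCompact K) {w : Fin d → ℂ} (hw : w ∈ K) :
    ‖eval w q‖ ≤ supNorm K q :=
  le_csSup (hK.image (continuous_eval q).norm).bddAbove ⟨w, hw, rfl⟩

lemma supNorm_le {C : ℝ} (hC : 0 ≤ C) (h : ∀ w ∈ K, ‖eval w q‖ ≤ C) : supNorm K q ≤ C :=
  Real.sSup_le (by rintro _ ⟨w, hw, rfl⟩; exact h w hw) hC

theorem norm_coeff_mul_le_supNorm (hK : IsCompact K) {ζ : ℂ} {N : ℕ} (hζ : IsPrimitiveRoot ζ N)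
    (hN : N ≠ 0) (hinv : ∀ k : Fin d → ℕ, ∀ z ∈ K, (fun i => ζ ^ k i * z i) ∈ K)
    {α : Fin d →₀ ℕ} (hq : ∀ β ∈ q.support, ∀ i, β i < N) (hα : ∀ i, α i < N)
    {z : Fin d → ℂ} (hz : z ∈ K) :
    ‖coeff α q * ∏ i, z i ^ α i‖ ≤ supNorm K q := by
  have hNd : (0 : ℝ) < (N : ℝ) ^ d := by positivity
  refine le_of_mul_le_mul_left ?_ hNd
  calc (N : ℝ) ^ d * ‖coeff α q * ∏ i, z i ^ α i‖
      = ‖∑ k : Fin d → Fin N,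
          eval (fun i => ζ ^ (k i : ℕ) * z i) q / ∏ i, ζ ^ ((k i : ℕ) * α i)‖ := by
        rw [sum_eval_rotate_div hζ hq hα z, Fintype.card_fin, mul_assoc, norm_mul ((N : ℂ) ^ d),
          norm_pow, Complex.norm_natCast]
    _ ≤ ∑ k : Fin d → Fin N,
          ‖eval (fun i => ζ ^ (k i : ℕ) * z i) q / ∏ i, ζ ^ ((k i : ℕ) * α i)‖ :=
        norm_sum_le _ _
    _ = ∑ k : Fin d → Fin N, ‖eval (fun i => ζ ^ (k i : ℕ) * z i) q‖ := by
        simp [norm_prod, hζ.norm'_eq_one hN]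
    _ ≤ ∑ _k : Fin d → Fin N, supNorm K q :=
        sum_le_sum fun k _ => norm_eval_le_supNorm hK (hinv _ z hz)
    _ = (N : ℝ) ^ d * supNorm K q := by simp

end supNorm

lemma exp_two_pi_I_div_pow_mul_mem {d : ℕ} {K : Set (Fin d → ℂ)}
    (hinv : ∀ t : Fin d → ℝ, ∀ z ∈ K, (fun i => Complex.exp (Complex.I * (t i : ℂ)) * z i) ∈ K)
    (N : ℕ) (k : Fin d → ℕ) {z : Fin d → ℂ} (hz : z ∈ K) :
    (fun i => Complex.exp (2 * Real.pi * Complex.I / N) ^ k i * z i) ∈ K := by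
  convert hinv (fun i => 2 * Real.pi * k i / N) z hz using 3 with i
  rw [← Complex.exp_nat_mul]
  push_cast
  ring_nf

theorem stmt13 (d : ℕ) (K : Set (Fin d → ℂ)) (hK : IsCompact K)
    (hinv : ∀ t : Fin d → ℝ, ∀ z ∈ K,
      (fun i => Complex.exp (Complex.I * (t i : ℂ)) * z i) ∈ K)
    (α : Fin d →₀ ℕ)
    (Q : Set (MvPolynomial (Fin d) ℂ))
    (hQ : Q = {q | q.coeff α = 1 ∧
      ∀ β : Fin d →₀ ℕ, q.coeff β ≠ 0 → β = α ∨ gradedLexLT β α}) :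
    IsLeast ((supNorm K) '' Q) (supNorm K (MvPolynomial.monomial α (1:ℂ))) := by
  subst hQ
  refine ⟨⟨monomial α 1, ⟨by simp, fun β hβ => .inl ?_⟩, rfl⟩, ?_⟩
  · exact (by simpa [coeff_monomial] using hβ : α = β).symm
  rintro _ ⟨q, ⟨hq1, hq2⟩, rfl⟩
  set N := mdeg α + 1
  have hN : N ≠ 0 := Nat.succ_ne_zero _
  have hα : ∀ i, α i < N := fun i => Nat.lt_succ_of_le (le_mdeg α i)
  have hq : ∀ β ∈ q.support, ∀ i, β i < N := fun β hβ i =>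
    Nat.lt_succ_of_le <| (le_mdeg β i).trans <|
      (hq2 β (mem_support_iff.mp hβ)).elim (fun h => h ▸ le_rfl) gradedLexLT.mdeg_le
  refine supNorm_le supNorm_nonneg fun z hz => ?_
  have := norm_coeff_mul_le_supNorm hK (Complex.isPrimitiveRoot_exp N hN) hN
    (fun k w hw => exp_two_pi_I_div_pow_mul_mem hinv N k hw) hq hα hz
  rwa [hq1, one_mul, ← Finsupp.prod_pow, ← one_mul (α.prod _), ← eval_monomial] at this
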